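/- arXiv:1607.05432 — 7 statements merged into one kernel-verified Lean document; each statement's English description precedes it below -/
import Mathlib

section
/- Suppose the sub-models are linear in the observations: M(x) = Λ(x) Y(X) for a deterministic p×n matrix Λ(x), where Y(X) ∈ R^n is a centered random vector with covariance matrix K = k(X,X). If Λ(x) K Λ(x)^T is invertible, then the aggregated predictor M_A(x) = k_M(x)^T K_M(x)^{-1} M(x) equals λ_A(x)^T Y(X), where λ_A(x)^T = k(x,X) Λ(x)^T (Λ(x) K Λ(x)^T)^{-1} Λ(x), and the aggregated variance satisfies v_A(x) = k(x,x) - λ_A(x)^T k(X,x). -/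
/-!
The aggregated predictor is the linear combination `λᵀ Y(X)` with weights `λ = P k(X,x)`, where
`P = Λᵀ (Λ K Λᵀ)⁻¹ Λ` is symmetric and satisfies `P K P = P`. Expanding the square gives
`E[(Y(x) - λᵀ Y(X))²] = k(x,x) - 2 λᵀ k(X,x) + λᵀ K λ`, and `P K P = P` turns `λᵀ K λ` into
`λᵀ k(X,x)`.
-/

open MeasureTheory Matrix

section SecondMoments

variable {Ω ι : Type*} [Fintype ι] [MeasurableSpace Ω] {μ : Measure Ω}

lemma memLp_dotProduct {X : Ω → ι → ℝ} (hX : ∀ i, MemLp (fun ω => X ω i) 2 μ) (c : ι → ℝ) :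
    MemLp (fun ω => c ⬝ᵥ X ω) 2 μ :=
  memLp_finsetSum _ fun i _ => (hX i).const_mul (c i)

lemma integral_mul_dotProduct {f : Ω → ℝ} {X : Ω → ι → ℝ} (hf : MemLp f 2 μ)
    (hX : ∀ i, MemLp (fun ω => X ω i) 2 μ) (c : ι → ℝ) :
    ∫ ω, f ω * (c ⬝ᵥ X ω) ∂μ = c ⬝ᵥ fun i => ∫ ω, f ω * X ω i ∂μ := by
  have hint : ∀ i, Integrable (fun ω => c i * (f ω * X ω i)) μ :=
    fun i => (hf.integrable_mul (hX i)).const_mul (c i)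
  simp only [dotProduct, Finset.mul_sum, mul_left_comm (f _)]
  rw [integral_finsetSum _ fun i _ => hint i]
  simp only [integral_const_mul]

lemma integral_sub_sq {f g : Ω → ℝ} (hf : MemLp f 2 μ) (hg : MemLp g 2 μ) :
    ∫ ω, (f ω - g ω) ^ 2 ∂μ = ∫ ω, f ω ^ 2 ∂μ - 2 * ∫ ω, f ω * g ω ∂μ + ∫ ω, g ω * g ω ∂μ := by
  have hexpand : ∀ ω, (f ω - g ω) ^ 2 = f ω ^ 2 - 2 * (f ω * g ω) + g ω * g ω := fun ω => by
    ring
  have hfg : Integrable (fun ω => 2 * (f ω * g ω)) μ := (hf.integrable_mul hg).const_mul 2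
  have hsub : Integrable (fun ω => f ω ^ 2 - 2 * (f ω * g ω)) μ := hf.integrable_sq.sub hfg
  have hgg : Integrable (fun ω => g ω * g ω) μ := hg.integrable_mul hg
  simp only [hexpand]
  rw [integral_add hsub hgg, integral_sub hf.integrable_sq hfg, integral_const_mul]

omit [Fintype ι] in
lemma isSymm_of_eq_integral_mul {X : Ω → ι → ℝ} {K : Matrix ι ι ℝ}
    (hK : ∀ i j, K i j = ∫ ω, X ω i * X ω j ∂μ) : K.IsSymm :=
  IsSymm.ext fun i j => by simp only [hK, mul_comm]

lemma integral_sub_dotProduct_sq {f : Ω → ℝ} {X : Ω → ι → ℝ} (hf : MemLp f 2 μ)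
    (hX : ∀ i, MemLp (fun ω => X ω i) 2 μ) {K : Matrix ι ι ℝ}
    (hK : ∀ i j, K i j = ∫ ω, X ω i * X ω j ∂μ) {k : ι → ℝ}
    (hk : ∀ i, k i = ∫ ω, f ω * X ω i ∂μ) (c : ι → ℝ) :
    ∫ ω, (f ω - c ⬝ᵥ X ω) ^ 2 ∂μ = ∫ ω, f ω ^ 2 ∂μ - 2 * (c ⬝ᵥ k) + c ⬝ᵥ (K *ᵥ c) := by
  have hcX := memLp_dotProduct hX c
  have hKc : K *ᵥ c = fun i => ∫ ω, (c ⬝ᵥ X ω) * X ω i ∂μ := funext fun i => by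
    simp only [mul_comm (c ⬝ᵥ X _)]
    rw [integral_mul_dotProduct (hX i) hX, mulVec, dotProduct_comm, ← funext (hK i)]
  rw [integral_sub_sq hf hcX, integral_mul_dotProduct hf hX, ← funext hk, hKc,
    integral_mul_dotProduct hcX hX]

end SecondMoments

section AggregationMatrix

variable {m n R : Type*} [Fintype m] [DecidableEq m] [Fintype n] [CommRing R]

noncomputable def aggregationMatrix (L : Matrix m n R) (K : Matrix n n R) : Matrix n n R :=
  Lᵀ * (L * K * Lᵀ)⁻¹ * L

lemma aggregationMatrix_mul_mul_self {L : Matrix m n R} {K : Matrix n n R}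
    (h : IsUnit (L * K * Lᵀ).det) :
    aggregationMatrix L K * K * aggregationMatrix L K = aggregationMatrix L K := by
  calc aggregationMatrix L K * K * aggregationMatrix L K
      = Lᵀ * (L * K * Lᵀ)⁻¹ * (L * K * Lᵀ) * (L * K * Lᵀ)⁻¹ * L := by
        simp only [aggregationMatrix, Matrix.mul_assoc]
    _ = aggregationMatrix L K := by rw [nonsing_inv_mul_cancel_right _ _ h]; rfl

lemma isSymm_aggregationMatrix (L : Matrix m n R) {K : Matrix n n R} (hK : K.IsSymm) :
    (aggregationMatrix L K).IsSymm := by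
  have hA : (L * K * Lᵀ).IsSymm := by
    simp only [IsSymm, transpose_mul, transpose_transpose, hK.eq, Matrix.mul_assoc]
  rw [aggregationMatrix, IsSymm, transpose_mul, transpose_mul, transpose_transpose, hA.inv.eq,
    ← Matrix.mul_assoc]

end AggregationMatrix

theorem stmt_1_general {Ω : Type*} [MeasurableSpace Ω] (μ : Measure Ω)
    {n q : ℕ} (Yx : Ω → ℝ) (YX : Ω → Fin n → ℝ)
    (hYL2 : MemLp Yx 2 μ) (hXL2 : ∀ i, MemLp (fun ω => YX ω i) 2 μ)
    (K : Matrix (Fin n) (Fin n) ℝ) (hK : ∀ i j, K i j = ∫ ω, YX ω i * YX ω j ∂μ)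
    (kx : Fin n → ℝ) (hkx : ∀ i, kx i = ∫ ω, Yx ω * YX ω i ∂μ)
    (kxx : ℝ) (hkxx : kxx = ∫ ω, Yx ω ^ 2 ∂μ)
    (L : Matrix (Fin q) (Fin n) ℝ)
    (M : Fin q → Ω → ℝ) (hM : ∀ i ω, M i ω = (L *ᵥ YX ω) i)
    (hinv : IsUnit (L * K * Lᵀ).det)
    (MA : Ω → ℝ)
    (hMA : ∀ ω, MA ω = (L *ᵥ kx) ⬝ᵥ ((L * K * Lᵀ)⁻¹ *ᵥ (fun i => M i ω))) :
    (∀ ω, MA ω = kx ⬝ᵥ (Lᵀ *ᵥ ((L * K * Lᵀ)⁻¹ *ᵥ (L *ᵥ YX ω)))) ∧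
    ∫ ω, (Yx ω - MA ω) ^ 2 ∂μ
      = kxx - kx ⬝ᵥ (Lᵀ *ᵥ ((L * K * Lᵀ)⁻¹ *ᵥ (L *ᵥ kx))) := by
  have hMA_eq : ∀ ω, MA ω = kx ⬝ᵥ (Lᵀ *ᵥ ((L * K * Lᵀ)⁻¹ *ᵥ (L *ᵥ YX ω))) := fun ω => by
    rw [hMA, dotProduct_mulVec kx, vecMul_transpose, funext (hM · ω)]
  refine ⟨hMA_eq, ?_⟩
  set P := aggregationMatrix L K
  have hP : ∀ v, Lᵀ *ᵥ ((L * K * Lᵀ)⁻¹ *ᵥ (L *ᵥ v)) = P *ᵥ v := fun v => by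
    rw [mulVec_mulVec, mulVec_mulVec]
    rfl
  have hPsymm : P.IsSymm := isSymm_aggregationMatrix L (isSymm_of_eq_integral_mul hK)
  have hweights : ∀ ω, MA ω = (P *ᵥ kx) ⬝ᵥ YX ω := fun ω => by
    rw [hMA_eq, hP, dotProduct_mulVec, ← mulVec_transpose, hPsymm.eq]
  have hquad : (P *ᵥ kx) ⬝ᵥ (K *ᵥ (P *ᵥ kx)) = (P *ᵥ kx) ⬝ᵥ kx := by
    have hPKP : P * K * P = P := aggregationMatrix_mul_mul_self hinv
    calc (P *ᵥ kx) ⬝ᵥ (K *ᵥ (P *ᵥ kx)) = (kx ᵥ* P) ⬝ᵥ ((K * P) *ᵥ kx) := by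
          rw [← mulVec_transpose, hPsymm.eq, mulVec_mulVec]
      _ = kx ⬝ᵥ ((P * K * P) *ᵥ kx) := by
          rw [← dotProduct_mulVec, mulVec_mulVec, Matrix.mul_assoc]
      _ = (P *ᵥ kx) ⬝ᵥ kx := by rw [hPKP, dotProduct_comm]
  simp only [hweights]
  rw [integral_sub_dotProduct_sq hYL2 hXL2 hK hkx, hquad, hP, ← hkxx, dotProduct_comm kx]
  ring

/-- Linear sub-models: if `M(x) = Λ Y(X)` with `Λ K Λᵀ` invertible, then the aggregated
predictor `M_A(x) = k_Mᵀ K_M⁻¹ M(x)` equals `λ_Aᵀ Y(X)` with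
`λ_Aᵀ = k(x,X) Λᵀ (Λ K Λᵀ)⁻¹ Λ`, and `v_A(x) = k(x,x) - λ_Aᵀ k(X,x)`. -/
theorem stmt_1 {Ω : Type*} [MeasurableSpace Ω] (μ : Measure Ω) [IsProbabilityMeasure μ]
    {n q : ℕ} (Yx : Ω → ℝ) (YX : Ω → Fin n → ℝ)
    (hYc : ∫ ω, Yx ω ∂μ = 0) (hXc : ∀ i, ∫ ω, YX ω i ∂μ = 0)
    (hYL2 : MemLp Yx 2 μ) (hXL2 : ∀ i, MemLp (fun ω => YX ω i) 2 μ)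
    (K : Matrix (Fin n) (Fin n) ℝ) (hK : ∀ i j, K i j = ∫ ω, YX ω i * YX ω j ∂μ)
    (kx : Fin n → ℝ) (hkx : ∀ i, kx i = ∫ ω, Yx ω * YX ω i ∂μ)
    (kxx : ℝ) (hkxx : kxx = ∫ ω, Yx ω ^ 2 ∂μ)
    (L : Matrix (Fin q) (Fin n) ℝ)
    (M : Fin q → Ω → ℝ) (hM : ∀ i ω, M i ω = (L *ᵥ YX ω) i)
    (hinv : IsUnit (L * K * Lᵀ).det)
    (MA : Ω → ℝ)
    (hMA : ∀ ω, MA ω = (L *ᵥ kx) ⬝ᵥ ((L * K * Lᵀ)⁻¹ *ᵥ (fun i => M i ω))) :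
    (∀ ω, MA ω = kx ⬝ᵥ (Lᵀ *ᵥ ((L * K * Lᵀ)⁻¹ *ᵥ (L *ᵥ YX ω)))) ∧
    ∫ ω, (Yx ω - MA ω) ^ 2 ∂μ
      = kxx - kx ⬝ᵥ (Lᵀ *ᵥ ((L * K * Lᵀ)⁻¹ *ᵥ (L *ᵥ kx))) :=
  stmt_1_general μ Yx YX hYL2 hXL2 K hK kx hkx kxx hkxx L M hM hinv MA hMA
end

section
/- Suppose that for some observation point x_k there exists an index i such that M_i(x_k) = Y(x_k) almost surely, and that K_M(x_k) = Cov(M(x_k), M(x_k)) is invertible. Then the aggregated predictor interpolates at x_k: M_A(x_k) = Y(x_k) almost surely, and hence v_A(x_k) = E[(Y(x_k) - M_A(x_k))^2] = 0. -/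
open MeasureTheory Matrix

theorem Matrix.inv_mulVec_col_eq_single {n R : Type*} [Fintype n] [DecidableEq n] [CommRing R]
    (A : Matrix n n R) (hA : IsUnit A.det) (j : n) : A⁻¹ *ᵥ A.col j = Pi.single j 1 := by
  rw [← mulVec_single_one, mulVec_mulVec, nonsing_inv_mul _ hA, one_mulVec]

theorem stmt_2_general {Ω : Type*} [MeasurableSpace Ω] (μ : Measure Ω)
    {p : ℕ} (Y : Ω → ℝ) (M : Fin p → Ω → ℝ)
    (kM : Fin p → ℝ) (hkM : ∀ i, kM i = ∫ ω, M i ω * Y ω ∂μ)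
    (KM : Matrix (Fin p) (Fin p) ℝ) (hKM : ∀ i j, KM i j = ∫ ω, M i ω * M j ω ∂μ)
    (hinv : IsUnit KM.det)
    (i₀ : Fin p) (hMi : M i₀ =ᵐ[μ] Y) :
    (fun ω => ∑ i, (KM⁻¹ *ᵥ kM) i * M i ω) =ᵐ[μ] Y ∧
    ∫ ω, (Y ω - ∑ i, (KM⁻¹ *ᵥ kM) i * M i ω) ^ 2 ∂μ = 0 := by
  -- Since `Y = M i₀` a.s., `kM` is the `i₀`-th column of `KM`, so the weights form a unit vector.
  have hcol : kM = KM.col i₀ := funext fun i => by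
    rw [hkM, col_apply, hKM]
    exact integral_congr_ae (hMi.mono fun ω h => congrArg (M i ω * ·) h.symm)
  have hcoef : KM⁻¹ *ᵥ kM = Pi.single i₀ 1 := hcol ▸ KM.inv_mulVec_col_eq_single hinv i₀
  have hMA : ∀ ω, ∑ i, (KM⁻¹ *ᵥ kM) i * M i ω = M i₀ ω := fun ω => by
    rw [hcoef]
    exact single_one_dotProduct i₀ fun i => M i ω
  simp only [hMA]
  exact ⟨hMi, integral_eq_zero_of_ae (hMi.mono fun ω h => by simp [h])⟩

/-- Interpolation property: if one of the sub-models coincides almost surely with `Y` at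
the point `x_k`, and `K_M(x_k)` is invertible, then the aggregated predictor
`M_A = k_Mᵀ K_M⁻¹ M` also coincides almost surely with `Y` there, and its mean squared
error vanishes. -/
theorem stmt_2 {Ω : Type*} [MeasurableSpace Ω] (μ : Measure Ω) [IsProbabilityMeasure μ]
    {p : ℕ} (Y : Ω → ℝ) (M : Fin p → Ω → ℝ)
    (hY : MemLp Y 2 μ) (hM : ∀ i, MemLp (M i) 2 μ)
    (hYc : ∫ ω, Y ω ∂μ = 0) (hMc : ∀ i, ∫ ω, M i ω ∂μ = 0)
    (kM : Fin p → ℝ) (hkM : ∀ i, kM i = ∫ ω, M i ω * Y ω ∂μ)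
    (KM : Matrix (Fin p) (Fin p) ℝ) (hKM : ∀ i j, KM i j = ∫ ω, M i ω * M j ω ∂μ)
    (hinv : IsUnit KM.det)
    (i₀ : Fin p) (hMi : M i₀ =ᵐ[μ] Y) :
    (fun ω => ∑ i, (KM⁻¹ *ᵥ kM) i * M i ω) =ᵐ[μ] Y ∧
    ∫ ω, (Y ω - ∑ i, (KM⁻¹ *ᵥ kM) i * M i ω) ^ 2 ∂μ = 0 :=
  stmt_2_general μ Y M kM hkM KM hKM hinv i₀ hMi
end

section
/- Define the aggregated process Y_A = M_A + ε'_A where ε'_A is an independent copy of Y - M_A. Suppose M_A(x) = g_x(Y(X)) for a deterministic measurable function g_x for every x, and M_A(X) = Y(X) (interpolation). Then E[Y_A(x) | Y_A(X)] = M_A(x) and Var(Y_A(x) | Y_A(X)) = v_A(x) = E[(Y(x) - M_A(x))^2]. -/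
/-!
Interpolation forces `ε'(X) = 0` a.s. (it has the law of `Y(X) - M_A(X) = 0`), so `Y_A(X) = Y(X)`
a.s. and conditioning on `Y_A(X)` is the same as conditioning on `Y(X)`. Given `Y(X)`, the term
`M_A(x)` is known, while `ε'(x)` is independent of `Y(X)`; hence the conditional mean and second
moment of `ε'(x)` are its unconditional ones, `0` and `E[(Y(x) - M_A(x))²]`.
-/

open MeasureTheory ProbabilityTheory

section

variable {Ω β E : Type*} {m₀ : MeasurableSpace Ω} {μ : Measure Ω}
  [NormedAddCommGroup E] [NormedSpace ℝ E] [CompleteSpace E]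

/-- Via Doob–Dynkin, `μ[f | σ(ψ)] = g ∘ ψ`, and `g ∘ φ` is then a version of `μ[f | σ(φ)]`. -/
theorem condExp_comap_congr_ae [IsFiniteMeasure μ] [MeasurableSpace β] {φ ψ : Ω → β}
    (hφ : Measurable φ) (hψ : Measurable ψ) (hφψ : φ =ᵐ[μ] ψ) (f : Ω → E) :
    μ[f | MeasurableSpace.comap φ inferInstance] =ᵐ[μ]
      μ[f | MeasurableSpace.comap ψ inferInstance] := by
  by_cases hf : Integrable f μ
  swap
  · rw [condExp_of_not_integrable hf, condExp_of_not_integrable hf]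
  obtain ⟨g, hg, hgψ⟩ := (stronglyMeasurable_condExp (f := f) (μ := μ)
    (m := MeasurableSpace.comap ψ inferInstance)).exists_eq_measurable_comp
  have hgφψ : g ∘ φ =ᵐ[μ] g ∘ ψ := hφψ.fun_comp g
  have hpre : ∀ B : Set β, φ ⁻¹' B =ᵐ[μ] ψ ⁻¹' B := fun B =>
    hφψ.mono fun ω hω => show (φ ω ∈ B) = (ψ ω ∈ B) by rw [hω]
  have hgφ : g ∘ φ =ᵐ[μ] μ[f | MeasurableSpace.comap φ inferInstance] := by
    refine ae_eq_condExp_of_forall_setIntegral_eq hφ.comap_le hf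
      (fun s _ _ => (integrable_condExp.congr (hgψ ▸ hgφψ.symm)).integrableOn)
      (fun s hs _ => ?_) (hg.comp_measurable (comap_measurable φ)).aestronglyMeasurable
    obtain ⟨B, hB, rfl⟩ := hs
    calc ∫ ω in φ ⁻¹' B, (g ∘ φ) ω ∂μ
        = ∫ ω in ψ ⁻¹' B, μ[f | MeasurableSpace.comap ψ inferInstance] ω ∂μ := by
          rw [setIntegral_congr_set (hpre B), hgψ]
          exact setIntegral_congr_ae (hψ hB) (hgφψ.mono fun ω hω _ => hω)
      _ = ∫ ω in ψ ⁻¹' B, f ω ∂μ := setIntegral_condExp hψ.comap_le hf ⟨B, hB, rfl⟩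
      _ = ∫ ω in φ ⁻¹' B, f ω ∂μ := setIntegral_congr_set (hpre B).symm
  exact hgφ.symm.trans (hgψ ▸ hgφψ)

theorem condExp_add_indep_eq [IsFiniteMeasure μ] {m mₑ : MeasurableSpace Ω}
    (hm : m ≤ m₀) (hmₑ : mₑ ≤ m₀) {f e : Ω → E} (hf : StronglyMeasurable[m] f)
    (hfi : Integrable f μ) (he : StronglyMeasurable[mₑ] e) (hei : Integrable e μ)
    (hindep : Indep mₑ m μ) :
    μ[f + e | m] =ᵐ[μ] f + fun _ => μ[e] := by
  filter_upwards [condExp_add hfi hei m, condExp_indep_eq hmₑ hm he hindep] with ω hadd hind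
  rw [hadd, Pi.add_apply, condExp_of_stronglyMeasurable hm hf hfi, hind, Pi.add_apply]

end

section

variable {Ω ι : Type*} [MeasurableSpace Ω] {μ : Measure Ω}

theorem identDistrib_eval_of_map_eq {f g : ι → Ω → ℝ} (hf : ∀ i, Measurable (f i))
    (hg : ∀ i, Measurable (g i))
    (hfg : Measure.map (fun ω i => f i ω) μ = Measure.map (fun ω i => g i ω) μ) (i : ι) :
    IdentDistrib (f i) (g i) μ μ :=
  (IdentDistrib.mk (measurable_pi_lambda _ hf).aemeasurable
    (measurable_pi_lambda _ hg).aemeasurable hfg).comp (measurable_pi_apply i)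

theorem ae_eq_of_add_identDistrib_sub [Countable ι] {Z M ε Y : ι → Ω → ℝ}
    (hZ : ∀ i ω, Z i ω = M i ω + ε i ω) (hε : ∀ i, IdentDistrib (ε i) (Y i - M i) μ μ)
    (hM : ∀ i, M i =ᵐ[μ] Y i) :
    (fun ω i => Z i ω) =ᵐ[μ] fun ω i => Y i ω := by
  have hε_zero : ∀ i, ∀ᵐ ω ∂μ, ε i ω = 0 := fun i =>
    (hε i).symm.ae_snd (measurableSet_singleton 0)
      ((hM i).mono fun ω hω => sub_eq_zero.mpr hω.symm)
  filter_upwards [ae_all_iff.mpr hε_zero, ae_all_iff.mpr hM] with ω hεω hMω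
  funext i
  rw [hZ, hεω i, hMω i, add_zero]

end

/-- The aggregated process `Y_A = M_A + ε'` (with `ε'` an independent replicate of
`Y - M_A`) satisfies, when `M_A(x)` is a deterministic measurable function of `Y(X)` and
`M_A` interpolates `Y` at `X`:
`E[Y_A(x) | Y_A(X)] = M_A(x)` and `Var(Y_A(x) | Y_A(X)) = E[(Y(x) - M_A(x))²]`. -/
theorem stmt_5 {Ω D : Type*} [MeasurableSpace Ω] (μ : Measure Ω) [IsProbabilityMeasure μ]
    {n : ℕ} (X : Fin n → D)
    (Y MA ε YA : D → Ω → ℝ)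
    (hYmeas : ∀ x, Measurable (Y x)) (hεmeas : ∀ x, Measurable (ε x))
    (hYL2 : ∀ x, MemLp (Y x) 2 μ) (hMAL2 : ∀ x, MemLp (MA x) 2 μ)
    (hεL2 : ∀ x, MemLp (ε x) 2 μ)
    (hYc : ∀ x, ∫ ω, Y x ω ∂μ = 0) (hMAc : ∀ x, ∫ ω, MA x ω ∂μ = 0)
    -- Y_A = M_A + ε'
    (hYA : ∀ x ω, YA x ω = MA x ω + ε x ω)
    -- M_A(x) is a deterministic (measurable) function of Y(X)
    (hMA_meas : ∀ x, Measurable[MeasurableSpace.comap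
        (fun ω (i : Fin n) => Y (X i) ω) inferInstance] (MA x))
    -- interpolation: M_A(X) = Y(X)
    (hinterp : ∀ i, MA (X i) =ᵐ[μ] Y (X i))
    -- ε' has the same law as the process Y - M_A
    (hlaw : Measure.map (fun ω (x : D) => ε x ω) μ =
        Measure.map (fun ω (x : D) => Y x ω - MA x ω) μ)
    -- and is independent of the process (Y, M_A)
    (hindep : Indep
        (MeasurableSpace.comap (fun ω (x : D) => ε x ω) inferInstance)
        (MeasurableSpace.comap (fun ω (x : D) => (Y x ω, MA x ω)) inferInstance) μ) :
    ∀ x : D,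
      (μ[YA x | MeasurableSpace.comap (fun ω (i : Fin n) => YA (X i) ω) inferInstance]
          =ᵐ[μ] MA x) ∧
      (μ[fun ω => (YA x ω - MA x ω) ^ 2 |
            MeasurableSpace.comap (fun ω (i : Fin n) => YA (X i) ω) inferInstance]
          =ᵐ[μ] fun _ => ∫ ω, (Y x ω - MA x ω) ^ 2 ∂μ) := by
  intro x
  have hYX : Measurable fun ω (i : Fin n) => Y (X i) ω :=
    measurable_pi_lambda _ fun i => hYmeas (X i)
  have hMAmeas : ∀ z, Measurable (MA z) := fun z => (hMA_meas z).mono hYX.comap_le le_rfl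
  have hYA_eq : ∀ z, YA z = MA z + ε z := fun z => funext (hYA z)
  have hlawpt := identDistrib_eval_of_map_eq hεmeas (fun z => (hYmeas z).sub (hMAmeas z)) hlaw
  have hcond_design : ∀ f : Ω → ℝ,
      μ[f | MeasurableSpace.comap (fun ω (i : Fin n) => YA (X i) ω) inferInstance] =ᵐ[μ]
        μ[f | MeasurableSpace.comap (fun ω (i : Fin n) => Y (X i) ω) inferInstance] :=
    condExp_comap_congr_ae
      (measurable_pi_lambda _ fun i => hYA_eq (X i) ▸ (hMAmeas _).add (hεmeas _)) hYX
      (ae_eq_of_add_identDistrib_sub (fun i => hYA (X i)) (fun i => hlawpt (X i)) hinterp)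
  have hproj : Measurable fun (f : D → ℝ × ℝ) (i : Fin n) => (f (X i)).1 :=
    measurable_pi_lambda _ fun i => (measurable_pi_apply (X i)).fst
  have hindep_design : Indep (MeasurableSpace.comap (fun ω (z : D) => ε z ω) inferInstance)
      (MeasurableSpace.comap (fun ω (i : Fin n) => Y (X i) ω) inferInstance) μ :=
    indep_of_indep_of_le_right hindep
      (hproj.comp (comap_measurable fun ω (z : D) => (Y z ω, MA z ω))).comap_le
  have hε_meas : Measurable[MeasurableSpace.comap (fun ω (z : D) => ε z ω) inferInstance] (ε x) :=
    (measurable_pi_apply x).comp (comap_measurable (fun ω (z : D) => ε z ω))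
  constructor
  · have hε_mean : μ[ε x] = 0 := by
      rw [(hlawpt x).integral_eq, integral_sub' ((hYL2 x).integrable one_le_two)
        ((hMAL2 x).integrable one_le_two), hYc, hMAc, sub_zero]
    refine (hcond_design _).trans ?_
    rw [hYA_eq]
    refine (condExp_add_indep_eq hYX.comap_le (measurable_pi_lambda _ hεmeas).comap_le
      (hMA_meas x).stronglyMeasurable ((hMAL2 x).integrable one_le_two)
      hε_meas.stronglyMeasurable ((hεL2 x).integrable one_le_two) hindep_design).trans ?_
    rw [hε_mean]
    exact Filter.EventuallyEq.of_eq (add_zero (MA x))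
  · have hsq : (fun ω => (YA x ω - MA x ω) ^ 2) = fun ω => ε x ω ^ 2 := by
      funext ω; rw [hYA, add_sub_cancel_left]
    have hvar : μ[fun ω => ε x ω ^ 2] = ∫ ω, (Y x ω - MA x ω) ^ 2 ∂μ :=
      ((hlawpt x).comp (measurable_id.pow_const 2)).integral_eq
    rw [hsq, ← hvar]
    exact (hcond_design _).trans (condExp_indep_eq (measurable_pi_lambda _ hεmeas).comap_le
      hYX.comap_le (hε_meas.pow_const 2).stronglyMeasurable hindep_design)
end

section
/- Let D ⊂ R^d be compact and Y a centered Gaussian process with continuous covariance k on D. Let (x_{ni}) be a triangular array dense in D in the sense that δ_n := sup_{x∈D} min_{i≤n} ||x_{ni} - x|| → 0. Then the one-nearest-neighbor Kriging predictor satisfies sup_{x∈D} E[(Y(x) - M^{nn}_n(x))^2] → 0, where M^{nn}_n(x) = [k(x_n*(x), x_n*(x)) > 0] · k(x, x_n*(x)) k(x_n*(x), x_n*(x))^{-1} Y(x_n*(x)) with x_n*(x) a nearest design point to x. -/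
/-!
The one-point Kriging predictor at `t` is the best multiple of `Y t` in `L²`, so its error is at
most that of the predictor `Y t` itself, namely `E[(Y x - Y t)²] = k x x - 2 k x t + k t t`.
This increment variance is continuous in `(x, t)` and vanishes on the diagonal, hence is
uniformly small on pairs of points of the compact set `D` that are at most `δ_n` apart; and the
nearest design point to any `x` is within `δ_n` of it.
-/

open MeasureTheory Filter Topology

theorem TendstoUniformly.prodMk_same {ι α β γ : Type*} [UniformSpace β] [UniformSpace γ]
    {p : Filter ι} {F : ι → α → β} {f : α → β} {G : ι → α → γ} {g : α → γ}
    (hF : TendstoUniformly F f p) (hG : TendstoUniformly G g p) :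
    TendstoUniformly (fun n a => (F n a, G n a)) (fun a => (f a, g a)) p :=
  fun u hu => tendsto_diag.eventually ((hF.prodMk hG) u hu)

theorem tendstoUniformly_of_tendsto_iSup_iInf_dist {X N : Type*} [PseudoMetricSpace X]
    {s : Set X} (hs : Bornology.IsBounded s) {l : Filter N} {ι : N → Type*}
    [∀ n, Nonempty (ι n)] (p : ∀ n, ι n → s)
    (hδ : Tendsto (fun n => ⨆ q : s, ⨅ i, dist (q : X) (p n i)) l (𝓝 0))
    (x : N → s → s) (hx : ∀ n (q : s) i, dist (q : X) (x n q) ≤ dist (q : X) (p n i)) :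
    TendstoUniformly x id l := by
  obtain ⟨C, hC⟩ := Metric.isBounded_iff.mp hs
  rw [Metric.tendstoUniformly_iff]
  intro ε hε
  filter_upwards [hδ.eventually (gt_mem_nhds hε)] with n hn q
  have hbdd : BddAbove (Set.range fun q : s => ⨅ i, dist (q : X) (p n i)) := by
    refine ⟨C, ?_⟩
    rintro _ ⟨q, rfl⟩
    obtain ⟨i⟩ := ‹∀ n, Nonempty (ι n)› n
    exact (ciInf_le ⟨0, by rintro _ ⟨j, rfl⟩; exact dist_nonneg⟩ i).trans (hC q.2 (p n i).2)
  calc dist (id q) (x n q) ≤ ⨅ i, dist (q : X) (p n i) := le_ciInf (hx n q)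
    _ ≤ ⨆ q : s, ⨅ i, dist (q : X) (p n i) := le_ciSup hbdd q
    _ < ε := hn

theorem tendsto_iSup_of_le_of_tendstoUniformly_zero {N ι : Type*} {l : Filter N}
    {e g : N → ι → ℝ} (he : ∀ n i, 0 ≤ e n i) (hle : ∀ n i, e n i ≤ g n i)
    (hg : TendstoUniformly g 0 l) : Tendsto (fun n => ⨆ i, e n i) l (𝓝 0) := by
  rw [Metric.tendsto_nhds]
  intro ε hε
  filter_upwards [Metric.tendstoUniformly_iff.mp hg (ε / 2) (half_pos hε)] with n hn
  have hsup : ⨆ i, e n i ≤ ε / 2 := by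
    refine Real.iSup_le (fun i => (hle n i).trans ?_) (by positivity)
    have := hn i
    rw [Pi.zero_apply, dist_comm, Real.dist_eq, sub_zero] at this
    exact (le_abs_self _).trans this.le
  rw [Real.dist_eq, sub_zero, abs_of_nonneg (Real.iSup_nonneg (he n))]
  linarith

section SecondOrder

variable {Ω : Type*} [MeasurableSpace Ω] {μ : Measure Ω}

theorem integral_sub_mul_sq {f g : Ω → ℝ} (hf : MemLp f 2 μ) (hg : MemLp g 2 μ) (a : ℝ) :
    ∫ ω, (f ω - a * g ω) ^ 2 ∂μ
      = ∫ ω, f ω * f ω ∂μ - 2 * a * ∫ ω, f ω * g ω ∂μ + a ^ 2 * ∫ ω, g ω * g ω ∂μ := by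
  have hff : Integrable (fun ω => f ω * f ω) μ := hf.integrable_mul hf
  have hfg : Integrable (fun ω => f ω * g ω) μ := hf.integrable_mul hg
  have hgg : Integrable (fun ω => g ω * g ω) μ := hg.integrable_mul hg
  have hexpand : (fun ω => (f ω - a * g ω) ^ 2)
      = fun ω => (f ω * f ω - 2 * a * (f ω * g ω)) + a ^ 2 * (g ω * g ω) := by
    funext ω; ring
  have hI₁ : Integrable (fun ω => f ω * f ω - 2 * a * (f ω * g ω)) μ :=
    hff.sub (hfg.const_mul _)
  have hI₂ : Integrable (fun ω => a ^ 2 * (g ω * g ω)) μ := hgg.const_mul _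
  rw [hexpand, integral_add hI₁ hI₂, integral_sub hff (hfg.const_mul _), integral_const_mul,
    integral_const_mul]

variable {T : Type*} {Y : T → Ω → ℝ} {k : T → T → ℝ}

noncomputable def krigingCoeff (k : T → T → ℝ) (x t : T) : ℝ :=
  if 0 < k t t then k x t / k t t else 0

/-- `E[(Y x - Y t)²]`, twice the variogram. -/
def incrementVariance (k : T → T → ℝ) (x t : T) : ℝ :=
  k x x - 2 * k x t + k t t

theorem integral_sub_mul_sq_eq_cov (hY : ∀ x, MemLp (Y x) 2 μ)
    (hk : ∀ x x', ∫ ω, Y x ω * Y x' ω ∂μ = k x x') (x t : T) (a : ℝ) :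
    ∫ ω, (Y x ω - a * Y t ω) ^ 2 ∂μ = k x x - 2 * a * k x t + a ^ 2 * k t t := by
  rw [integral_sub_mul_sq (hY x) (hY t), hk, hk, hk]

theorem cov_self_nonneg (hk : ∀ x x', ∫ ω, Y x ω * Y x' ω ∂μ = k x x') (t : T) : 0 ≤ k t t :=
  hk t t ▸ integral_nonneg fun _ => mul_self_nonneg _

theorem cov_sq_le_mul (hY : ∀ x, MemLp (Y x) 2 μ)
    (hk : ∀ x x', ∫ ω, Y x ω * Y x' ω ∂μ = k x x') (x t : T) :
    k x t ^ 2 ≤ k x x * k t t := by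
  have hquad : ∀ a : ℝ, 0 ≤ k t t * (a * a) + (-2 * k x t) * a + k x x := fun a => by
    have : 0 ≤ ∫ ω, (Y x ω - a * Y t ω) ^ 2 ∂μ := integral_nonneg fun ω => sq_nonneg _
    rw [integral_sub_mul_sq_eq_cov hY hk] at this
    linarith
  have := discrim_le_zero hquad
  rw [discrim] at this
  linarith

theorem integral_sub_krigingCoeff_mul_sq_le (hY : ∀ x, MemLp (Y x) 2 μ)
    (hk : ∀ x x', ∫ ω, Y x ω * Y x' ω ∂μ = k x x') (x t : T) (a : ℝ) :
    ∫ ω, (Y x ω - krigingCoeff k x t * Y t ω) ^ 2 ∂μ ≤ ∫ ω, (Y x ω - a * Y t ω) ^ 2 ∂μ := by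
  rw [integral_sub_mul_sq_eq_cov hY hk, integral_sub_mul_sq_eq_cov hY hk, krigingCoeff]
  split_ifs with htt
  · have hgap : (k x x - 2 * a * k x t + a ^ 2 * k t t)
        - (k x x - 2 * (k x t / k t t) * k x t + (k x t / k t t) ^ 2 * k t t)
        = k t t * (a - k x t / k t t) ^ 2 := by
      field_simp; ring
    linarith [mul_nonneg htt.le (sq_nonneg (a - k x t / k t t))]
  · -- a degenerate `Y t` is uncorrelated with every `Y x`, by Cauchy–Schwarz
    have htt0 : k t t = 0 := le_antisymm (not_lt.mp htt) (cov_self_nonneg hk t)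
    have hxt0 : k x t = 0 := by
      have := cov_sq_le_mul hY hk x t
      rw [htt0, mul_zero] at this
      exact pow_eq_zero_iff two_ne_zero |>.mp (le_antisymm this (sq_nonneg _))
    simp [htt0, hxt0]

theorem integral_sub_krigingCoeff_mul_sq_le_incrementVariance (hY : ∀ x, MemLp (Y x) 2 μ)
    (hk : ∀ x x', ∫ ω, Y x ω * Y x' ω ∂μ = k x x') (x t : T) :
    ∫ ω, (Y x ω - krigingCoeff k x t * Y t ω) ^ 2 ∂μ ≤ incrementVariance k x t := by
  have := integral_sub_krigingCoeff_mul_sq_le hY hk x t 1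
  rw [integral_sub_mul_sq_eq_cov hY hk x t 1] at this
  rw [incrementVariance]
  linarith

end SecondOrder

section IncrementVariance

variable {T : Type*} {k : T → T → ℝ}

theorem incrementVariance_self (x : T) : incrementVariance k x x = 0 := by
  rw [incrementVariance]; ring

theorem continuous_incrementVariance [TopologicalSpace T]
    (hk : Continuous fun q : T × T => k q.1 q.2) :
    Continuous fun q : T × T => incrementVariance k q.1 q.2 :=
  ((hk.comp (continuous_fst.prodMk continuous_fst)).sub (continuous_const.mul hk)).add
    (hk.comp (continuous_snd.prodMk continuous_snd))

theorem tendstoUniformly_incrementVariance [UniformSpace T] [CompactSpace T]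
    (hk : Continuous fun q : T × T => k q.1 q.2) {ι : Type*} {l : Filter ι} {x : ι → T → T}
    (hx : TendstoUniformly x id l) :
    TendstoUniformly (fun n q => incrementVariance k q (x n q)) 0 l := by
  have hid : TendstoUniformly (fun (_ : ι) (q : T) => q) id l :=
    fun _ hu => Eventually.of_forall fun _ _ => refl_mem_uniformity hu
  have := (CompactSpace.uniformContinuous_of_continuous
    (continuous_incrementVariance hk)).comp_tendstoUniformly (hid.prodMk_same hx)
  simpa [Function.comp_def, incrementVariance_self, Pi.zero_def] using this

end IncrementVariance

theorem stmt_9_general {d : ℕ} {Ω : Type*} [MeasurableSpace Ω]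
    (μ : Measure Ω)
    (D : Set (EuclideanSpace ℝ (Fin d))) (hDc : IsCompact D)
    (Y : D → Ω → ℝ) (hYL2 : ∀ x, MemLp (Y x) 2 μ)
    (k : D → D → ℝ) (hkcont : Continuous fun q : D × D => k q.1 q.2)
    (hk : ∀ x x', ∫ ω, Y x ω * Y x' ω ∂μ = k x x')
    (pts : (n : ℕ) → Fin (n + 1) → D)
    (hδ : Tendsto (fun n => ⨆ q : D, ⨅ i : Fin (n + 1),
        dist (q : EuclideanSpace ℝ (Fin d)) (pts n i : EuclideanSpace ℝ (Fin d)))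
      atTop (nhds 0))
    -- x_n*(q) is a nearest design point to q
    (xstar : (n : ℕ) → D → D)
    (hxstar_near : ∀ (n : ℕ) (q : D) (i : Fin (n + 1)),
      dist (q : EuclideanSpace ℝ (Fin d)) (xstar n q : EuclideanSpace ℝ (Fin d))
        ≤ dist (q : EuclideanSpace ℝ (Fin d)) (pts n i : EuclideanSpace ℝ (Fin d)))
    (Mnn : (n : ℕ) → D → Ω → ℝ)
    (hMnn : ∀ n q ω, Mnn n q ω =
      if 0 < k (xstar n q) (xstar n q)
      then k q (xstar n q) / k (xstar n q) (xstar n q) * Y (xstar n q) ω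
      else 0) :
    Tendsto (fun n => ⨆ q : D, ∫ ω, (Y q ω - Mnn n q ω) ^ 2 ∂μ) atTop (nhds 0) := by
  have : CompactSpace D := isCompact_iff_compactSpace.mp hDc
  have hMnn_eq : ∀ n q, Mnn n q = fun ω => krigingCoeff k q (xstar n q) * Y (xstar n q) ω := by
    intro n q; funext ω; rw [hMnn, krigingCoeff]; split_ifs <;> simp
  have hnear : TendstoUniformly xstar id atTop :=
    tendstoUniformly_of_tendsto_iSup_iInf_dist hDc.isBounded pts hδ xstar hxstar_near
  refine tendsto_iSup_of_le_of_tendstoUniformly_zero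
    (fun n q => integral_nonneg fun ω => sq_nonneg _) (fun n q => ?_)
    (tendstoUniformly_incrementVariance hkcont hnear)
  rw [hMnn_eq]
  exact integral_sub_krigingCoeff_mul_sq_le_incrementVariance hYL2 hk q (xstar n q)

/-- Uniform consistency of the one-nearest-neighbor Kriging predictor: for a centered
second-order process `Y` on a compact `D ⊆ ℝ^d` with continuous covariance `k` and a
triangular array of design points that is uniformly dense in `D`, the predictor
`M^{nn}_n(x) = 1_{k(t,t) > 0} (k(x,t)/k(t,t)) Y(t)`, `t = x_n*(x)` a nearest design point
to `x`, satisfies `sup_{x ∈ D} E[(Y(x) - M^{nn}_n(x))²] → 0`. -/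
theorem stmt_9 {d : ℕ} {Ω : Type*} [MeasurableSpace Ω]
    (μ : Measure Ω) [IsProbabilityMeasure μ]
    (D : Set (EuclideanSpace ℝ (Fin d))) (hDc : IsCompact D) (hDne : D.Nonempty)
    (Y : D → Ω → ℝ) (hYL2 : ∀ x, MemLp (Y x) 2 μ) (hYc : ∀ x, ∫ ω, Y x ω ∂μ = 0)
    (k : D → D → ℝ) (hkcont : Continuous fun q : D × D => k q.1 q.2)
    (hk : ∀ x x', ∫ ω, Y x ω * Y x' ω ∂μ = k x x')
    (pts : (n : ℕ) → Fin (n + 1) → D)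
    (hδ : Tendsto (fun n => ⨆ q : D, ⨅ i : Fin (n + 1),
        dist (q : EuclideanSpace ℝ (Fin d)) (pts n i : EuclideanSpace ℝ (Fin d)))
      atTop (nhds 0))
    -- x_n*(q) is a nearest design point to q
    (xstar : (n : ℕ) → D → D)
    (hxstar_mem : ∀ n q, ∃ i, xstar n q = pts n i)
    (hxstar_near : ∀ (n : ℕ) (q : D) (i : Fin (n + 1)),
      dist (q : EuclideanSpace ℝ (Fin d)) (xstar n q : EuclideanSpace ℝ (Fin d))
        ≤ dist (q : EuclideanSpace ℝ (Fin d)) (pts n i : EuclideanSpace ℝ (Fin d)))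
    (Mnn : (n : ℕ) → D → Ω → ℝ)
    (hMnn : ∀ n q ω, Mnn n q ω =
      if 0 < k (xstar n q) (xstar n q)
      then k q (xstar n q) / k (xstar n q) (xstar n q) * Y (xstar n q) ω
      else 0) :
    Tendsto (fun n => ⨆ q : D, ∫ ω, (Y q ω - Mnn n q ω) ^ 2 ∂μ) atTop (nhds 0) :=
  stmt_9_general μ D hDc Y hYL2 k hkcont hk pts hδ xstar hxstar_near Mnn hMnn
end

section
/- Let k: D×D → R be a continuous covariance function on a compact D ⊂ R^d. Define F(x,t) = k(x,x) if k(t,t)=0 and F(x,t) = k(x,x) - k(x,t)^2/k(t,t) if k(t,t)>0. Then sup{F(x,t) : x,t ∈ D, ||x - t|| ≤ δ_n} → 0 for any sequence δ_n → 0. (In particular F(x,x) = 0 using Cauchy–Schwarz positivity of k.) -/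
open Filter

/-- Let `k` be a continuous, symmetric, positive semi-definite covariance function on a
compact set `D ⊆ ℝ^d` and let `F(x,t)` be the mean squared error of the one-point Kriging
predictor of `Y(x)` from `Y(t)`. Then `sup {F(x,t) : x, t ∈ D, ‖x - t‖ ≤ δ_n} → 0`
for any sequence `δ_n → 0`. -/
theorem stmt_11 {d : ℕ} (D : Set (EuclideanSpace ℝ (Fin d))) (hD : IsCompact D)
    (k : EuclideanSpace ℝ (Fin d) → EuclideanSpace ℝ (Fin d) → ℝ)
    (hcont : ContinuousOn (fun q : EuclideanSpace ℝ (Fin d) × EuclideanSpace ℝ (Fin d) =>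
      k q.1 q.2) (D ×ˢ D))
    (hsym : ∀ x ∈ D, ∀ t ∈ D, k x t = k t x)
    (hpsd : ∀ (m : ℕ) (pts : Fin m → EuclideanSpace ℝ (Fin d)) (c : Fin m → ℝ),
      (∀ i, pts i ∈ D) → 0 ≤ ∑ i, ∑ j, c i * c j * k (pts i) (pts j))
    (F : EuclideanSpace ℝ (Fin d) → EuclideanSpace ℝ (Fin d) → ℝ)
    (hF : ∀ x t, F x t = if k t t = 0 then k x x else k x x - (k x t) ^ 2 / k t t)
    (δ : ℕ → ℝ) (hδ : Tendsto δ atTop (nhds 0)) :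
    Tendsto (fun n => sSup {y : ℝ | ∃ x ∈ D, ∃ t ∈ D, dist x t ≤ δ n ∧ y = F x t})
      atTop (nhds 0) := by
  -- diagonal nonnegativity
  have hdiag : ∀ x ∈ D, 0 ≤ k x x := by
    intro x hx
    have h := hpsd 1 (fun _ => x) (fun _ => 1) (fun _ => hx)
    simpa using h
  -- Cauchy–Schwarz
  have hCS : ∀ x ∈ D, ∀ t ∈ D, (k x t) ^ 2 ≤ k x x * k t t := by
    intro x hx t ht
    have hsxt := hsym x hx t ht
    have hq : ∀ s : ℝ, 0 ≤ k x x * (s * s) + (k x t + k t x) * s + k t t := by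
      intro s
      have h := hpsd 2 ![x, t] ![s, 1] (by intro i; fin_cases i <;> simpa)
      simp [Fin.sum_univ_two] at h
      nlinarith [h]
    have hd := discrim_le_zero hq
    rw [discrim, ← hsxt] at hd
    nlinarith [hd]
  -- F is nonnegative
  have hFnonneg : ∀ x ∈ D, ∀ t ∈ D, 0 ≤ F x t := by
    intro x hx t ht
    rw [hF]
    by_cases h : k t t = 0
    · simpa [h] using hdiag x hx
    · rw [if_neg h]
      have htt : 0 < k t t := lt_of_le_of_ne (hdiag t ht) (Ne.symm h)
      rw [sub_nonneg, div_le_iff₀ htt]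
      exact hCS x hx t ht
  -- F is bounded by the "λ = 1" MSE
  have hFle : ∀ x ∈ D, ∀ t ∈ D, F x t ≤ (k x x - k x t) + (k t t - k t x) := by
    intro x hx t ht
    rw [hF]
    have hsxt := hsym x hx t ht
    by_cases h : k t t = 0
    · have hxt : k x t = 0 := by
        have h1 := hCS x hx t ht
        rw [h, mul_zero] at h1
        have h2 : k x t ^ 2 = 0 := le_antisymm h1 (sq_nonneg _)
        exact pow_eq_zero_iff two_ne_zero |>.mp h2
      have hxt' : k t x = 0 := hsxt ▸ hxt
      rw [if_pos h, h, hxt, hxt']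
      linarith
    · rw [if_neg h]
      have htt : 0 < k t t := lt_of_le_of_ne (hdiag t ht) (Ne.symm h)
      have hdm : k x t ^ 2 / k t t * k t t = k x t ^ 2 := div_mul_cancel₀ _ h
      nlinarith [sq_nonneg (k x t - k t t)]
  -- uniform continuity of k on D × D
  have hUC : UniformContinuousOn
      (fun q : EuclideanSpace ℝ (Fin d) × EuclideanSpace ℝ (Fin d) => k q.1 q.2) (D ×ˢ D) :=
    (hD.prod hD).uniformContinuousOn_of_continuous hcont
  rw [Metric.uniformContinuousOn_iff] at hUC
  rw [Metric.tendsto_atTop]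
  intro ε hε
  obtain ⟨η, hη, hkUC⟩ := hUC (ε / 4) (by linarith)
  have hev : ∀ᶠ n in atTop, δ n < η := hδ.eventually_lt_const hη
  obtain ⟨N, hN⟩ := eventually_atTop.mp hev
  refine ⟨N, fun n hn => ?_⟩
  set S := {y : ℝ | ∃ x ∈ D, ∃ t ∈ D, dist x t ≤ δ n ∧ y = F x t} with hS
  have key : ∀ y ∈ S, y ≤ ε / 2 := by
    rintro y ⟨x, hx, t, ht, hdxt, rfl⟩
    have hdxt' : dist x t < η := lt_of_le_of_lt hdxt (hN n hn)
    have hd1 : dist ((x, x) : EuclideanSpace ℝ (Fin d) × EuclideanSpace ℝ (Fin d)) (x, t) < η := by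
      rw [Prod.dist_eq]
      simp only [dist_self]
      exact max_lt hη hdxt'
    have hd2 : dist ((t, t) : EuclideanSpace ℝ (Fin d) × EuclideanSpace ℝ (Fin d)) (t, x) < η := by
      rw [Prod.dist_eq]
      simp only [dist_self]
      rw [dist_comm t x]
      exact max_lt hη hdxt'
    have h1 := hkUC (x, x) ⟨hx, hx⟩ (x, t) ⟨hx, ht⟩ hd1
    have h2 := hkUC (t, t) ⟨ht, ht⟩ (t, x) ⟨ht, hx⟩ hd2
    rw [Real.dist_eq] at h1 h2
    have h1' := abs_lt.mp h1
    have h2' := abs_lt.mp h2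
    have := hFle x hx t ht
    linarith [h1'.2, h2'.2]
  have h0 : 0 ≤ sSup S := Real.sSup_nonneg (by
    rintro y ⟨x, hx, t, ht, _, rfl⟩
    exact hFnonneg x hx t ht)
  have hle : sSup S ≤ ε / 2 := Real.sSup_le key (by linarith)
  rw [Real.dist_eq, sub_zero, abs_of_nonneg h0]
  linarith
end

section
/- Assume M(x) is linear in Y(X) and the family of sub-models interpolates Y at every design point (for each component x_k of X there is i_k with M_{i_k}(x_k) = Y(x_k)). Then 0 ≤ v_A(x) - v_full(x) ≤ min_{k=1,...,n} E[(Y(x) - M_k(x))^2] - v_full(x), where v_A(x) = E[(Y(x)-M_A(x))^2] and v_full(x) = E[(Y(x)-M_full(x))^2]. -/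
open MeasureTheory

/-- If the sub-models are linear in `Y(X)` and interpolate `Y` at every design point, then
`0 ≤ v_A(x) - v_full(x) ≤ min_j E[(Y(x) - M_j(x))²] - v_full(x)`, where `M_full` is the
best linear predictor of `Y(x)` from `Y(X)` and `M_A` the best linear combination of the
sub-models. -/
theorem stmt_13 {Ω D : Type*} [MeasurableSpace Ω] (μ : Measure Ω) [IsProbabilityMeasure μ]
    {n p : ℕ} (hp : 0 < p)
    (Y : D → Ω → ℝ) (X : Fin n → D) (x : D)
    (M : Fin p → D → Ω → ℝ)
    (hlin : ∀ j y, ∃ c : Fin n → ℝ, ∀ ω, M j y ω = ∑ i, c i * Y (X i) ω)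
    (hinterp : ∀ i, ∃ j, ∀ ω, M j (X i) ω = Y (X i) ω)
    (Mfull : Ω → ℝ)
    (hMfull_lin : ∃ c : Fin n → ℝ, ∀ ω, Mfull ω = ∑ i, c i * Y (X i) ω)
    (hMfull_opt : ∀ c : Fin n → ℝ,
      ∫ ω, (Y x ω - Mfull ω) ^ 2 ∂μ ≤ ∫ ω, (Y x ω - ∑ i, c i * Y (X i) ω) ^ 2 ∂μ)
    (MA : Ω → ℝ)
    (hMA_lin : ∃ a : Fin p → ℝ, ∀ ω, MA ω = ∑ j, a j * M j x ω)
    (hMA_opt : ∀ a : Fin p → ℝ,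
      ∫ ω, (Y x ω - MA ω) ^ 2 ∂μ ≤ ∫ ω, (Y x ω - ∑ j, a j * M j x ω) ^ 2 ∂μ) :
    0 ≤ (∫ ω, (Y x ω - MA ω) ^ 2 ∂μ) - ∫ ω, (Y x ω - Mfull ω) ^ 2 ∂μ ∧
    (∫ ω, (Y x ω - MA ω) ^ 2 ∂μ) - ∫ ω, (Y x ω - Mfull ω) ^ 2 ∂μ
      ≤ (⨅ j : Fin p, ∫ ω, (Y x ω - M j x ω) ^ 2 ∂μ) - ∫ ω, (Y x ω - Mfull ω) ^ 2 ∂μ := by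
  obtain ⟨a, ha⟩ := hMA_lin
  choose cs hcs using fun j => hlin j x
  constructor
  · have : (∫ ω, (Y x ω - Mfull ω) ^ 2 ∂μ) ≤ ∫ ω, (Y x ω - MA ω) ^ 2 ∂μ := by
      have heq : ∀ ω, MA ω = ∑ i, (∑ j, a j * cs j i) * Y (X i) ω := by
        intro ω
        simp only [ha, hcs, Finset.sum_mul, Finset.mul_sum, mul_assoc]
        rw [Finset.sum_comm]
      calc (∫ ω, (Y x ω - Mfull ω) ^ 2 ∂μ)
          ≤ ∫ ω, (Y x ω - ∑ i, (∑ j, a j * cs j i) * Y (X i) ω) ^ 2 ∂μ :=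
            hMfull_opt _
        _ = ∫ ω, (Y x ω - MA ω) ^ 2 ∂μ := by
            simp only [heq]
    linarith
  · have : Nonempty (Fin p) := ⟨⟨0, hp⟩⟩
    have h : (∫ ω, (Y x ω - MA ω) ^ 2 ∂μ) ≤ ⨅ j : Fin p, ∫ ω, (Y x ω - M j x ω) ^ 2 ∂μ := by
      apply le_ciInf
      intro j
      have := hMA_opt (fun j' => if j' = j then (1:ℝ) else 0)
      have hsum : ∀ ω, (∑ j', (if j' = j then (1:ℝ) else 0) * M j' x ω) = M j x ω := by
        intro ω
        rw [Finset.sum_eq_single j]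
        · simp
        · intro b _ hb; simp [hb]
        · simp
      simpa only [hsum] using this
    linarith
end

section
/- Let Δ = K^{-1} - Λ^T (Λ K Λ^T)^{-1} Λ, where K ∈ R^{n×n} is symmetric positive definite and Λ ∈ R^{p×n} is such that Λ K Λ^T is invertible. Then Δ is positive semi-definite. (Equivalently, the aggregated prediction variance never undercuts the full-model variance: v_A(x) - v_full(x) = k(x,X) Δ k(X,x) ≥ 0.) -/
open Matrix

/-- `Δ = K⁻¹ - Lᵀ (L K Lᵀ)⁻¹ L` is positive semi-definite. -/
theorem stmt_17 {n p : ℕ} (K : Matrix (Fin n) (Fin n) ℝ) (L : Matrix (Fin p) (Fin n) ℝ)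
    (hK : K.PosDef) (h : IsUnit (L * K * Lᵀ).det) :
    (K⁻¹ - Lᵀ * (L * K * Lᵀ)⁻¹ * L).PosSemidef := by
  set M := L * K * Lᵀ with hMdef
  have hKsym : Kᵀ = K := hK.isHermitian.eq
  have hKunit : IsUnit K.det := isUnit_iff_ne_zero.mpr hK.det_pos.ne'
  have hKinv : K⁻¹ * K = 1 := nonsing_inv_mul K hKunit
  have hKinv' : K * K⁻¹ = 1 := mul_nonsing_inv K hKunit
  have hMsym : Mᵀ = M := by
    simp [hMdef, transpose_mul, hKsym, Matrix.mul_assoc]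
  have hMinv : M * M⁻¹ = 1 := mul_nonsing_inv M h
  have hMinvsym : (M⁻¹)ᵀ = M⁻¹ := by
    rw [transpose_nonsing_inv, hMsym]
  set P := K⁻¹ - Lᵀ * M⁻¹ * L with hPdef
  have hPsym : Pᵀ = P := by
    simp [hPdef, transpose_sub, transpose_mul, hMinvsym, transpose_nonsing_inv, hKsym,
      Matrix.mul_assoc]
  have key : K⁻¹ - Lᵀ * M⁻¹ * L = Pᵀ * K * P := by
    rw [hPsym, hPdef]
    rw [sub_mul, sub_mul, mul_sub, mul_sub]
    rw [Matrix.mul_assoc K⁻¹ K, hKinv']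
    have h1 : Lᵀ * M⁻¹ * L * K * K⁻¹ = Lᵀ * M⁻¹ * L := by
      rw [Matrix.mul_assoc, Matrix.mul_assoc, hKinv', Matrix.mul_one, Matrix.mul_assoc]
    have h2 : Lᵀ * M⁻¹ * L * K * (Lᵀ * M⁻¹ * L) = Lᵀ * M⁻¹ * L := by
      calc Lᵀ * M⁻¹ * L * K * (Lᵀ * M⁻¹ * L)
          = Lᵀ * M⁻¹ * (L * K * Lᵀ) * (M⁻¹ * L) := by
            simp only [Matrix.mul_assoc]
        _ = Lᵀ * (M⁻¹ * M) * (M⁻¹ * L) := by rw [← hMdef]; simp only [Matrix.mul_assoc]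
        _ = Lᵀ * M⁻¹ * L := by
            rw [nonsing_inv_mul M h, Matrix.mul_one, ← Matrix.mul_assoc]
    rw [h1, h2, hKinv, Matrix.one_mul, Matrix.mul_one]
    abel
  have key' : P = Pᵀ * K * P := key
  rw [key']
  have := (hK.posSemidef).conjTranspose_mul_mul_same P
  simpa using this
end
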